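/- Fix k ≥ 1, 0 < q < 1 (more generally q ≠ 0), and positive reals a_1, a_2, …. Let u : ℤ_{≥0}^k → ℝ satisfy the two-body cumulative conditions: for every n ∈ ℤ_{≥0}^k and every 1 ≤ i ≤ k−1 with n_i = n_{i+1}, ([∇_a^{−1}]_i − q^{−1}[∇_a^{−1}]_{i+1}) u(n) = 0. Then for every n ∈ ℤ_{≥0}^k and indices b ≥ 0, c ≥ 1 with b + c ≤ k such that n_{b+1} = n_{b+2} = … = n_{b+c} (a cluster of size c), one has ([∇_a^{−1}]_r u)(n) = q^{r−(b+c)} ([∇_a^{−1}]_{b+c} u)(n) for every b+1 ≤ r ≤ b+c, and consequently (1−q^{−1}) Σ_{r=b+1}^{b+c} ([∇_a^{−1}]_r u)(n) = (1 − q^{−c}) ([∇_a^{−1}]_{b+c} u)(n). -/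

import Mathlib

/-!
Coordinates of `n ∈ ℤ_{≥0}^k` are indexed 0-based by `Fin k` (the paper's `n_r` is
`n ⟨r-1⟩`); the cluster `n_{b+1} = … = n_{b+c}` consists of the coordinates with
0-based index `r` satisfying `b ≤ r < b + c`.
-/

/-- `([∇_a^{-1}] u)(n) = −Σ_{j=1}^{n} a_j⁻¹ u(j)`, applied in the i-th coordinate. -/
noncomputable def gradInv (k : ℕ) (a : ℕ → ℝ) (u : (Fin k → ℕ) → ℝ)
    (i : Fin k) (n : Fin k → ℕ) : ℝ :=
  -(∑ j ∈ Finset.Icc 1 (n i), (a j)⁻¹ * u (Function.update n i j))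

/-!
Inside a cluster every adjacent pair of coordinates is equal, so the two-body condition applies
to each of them and says that `[∇_a^{-1}]_i u(n) = q⁻¹ [∇_a^{-1}]_{i+1} u(n)` along the cluster.
Iterating from the last coordinate `b + c` gives the powers `q^{r-(b+c)}`, and the second claim is
the telescoping geometric sum `(1 - q⁻¹) Σ_{j<c} q^{j+1-c} = 1 - q^{-c}`.
-/

open Finset

section Geometric

variable {K : Type*} [DivisionRing K] {q : K}

theorem eq_zpow_sub_mul_of_eq_inv_mul_succ (hq : q ≠ 0) {f : ℕ → K} {r m : ℕ} (hrm : r ≤ m)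
    (h : ∀ i, r ≤ i → i < m → f i = q⁻¹ * f (i + 1)) :
    f r = q ^ ((r : ℤ) - m) * f m := by
  induction m, hrm using Nat.le_induction with
  | base => simp
  | succ m hrm ih =>
    rw [ih fun i hri him => h i hri (by omega), h m hrm (by omega), ← mul_assoc, ← zpow_neg_one,
      ← zpow_add₀ hq]
    congr 2
    push_cast
    ring

theorem one_sub_inv_mul_sum_range_zpow (hq : q ≠ 0) (c : ℕ) :
    (1 - q⁻¹) * ∑ j ∈ range c, q ^ ((j : ℤ) + 1 - c) = 1 - q ^ (-(c : ℤ)) := by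
  have hstep (j : ℕ) :
      (1 - q⁻¹) * q ^ ((j : ℤ) + 1 - c) = q ^ (((j + 1 : ℕ) : ℤ) - c) - q ^ ((j : ℤ) - c) := by
    rw [sub_mul, one_mul, ← zpow_neg_one, ← zpow_add₀ hq]
    push_cast
    ring_nf
  rw [mul_sum, sum_congr rfl fun j _ => hstep j, sum_range_sub fun j : ℕ => q ^ ((j : ℤ) - c)]
  simp

end Geometric

theorem Fin.sum_filter_le_lt_eq_sum_range {M : Type*} [AddCommMonoid M] {k b c : ℕ}
    (hbck : b + c ≤ k) (F : ℕ → M) :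
    ∑ r ∈ univ.filter (fun r : Fin k => b ≤ r.1 ∧ r.1 < b + c), F r = ∑ j ∈ range c, F (b + j) := by
  have hval : (univ.filter fun r : Fin k => b ≤ r.1 ∧ r.1 < b + c).map Fin.valEmbedding
      = Ico b (b + c) := by
    ext m
    simp only [mem_map, mem_filter, mem_univ, true_and, Fin.valEmbedding_apply, mem_Ico]
    exact ⟨fun ⟨r, hr, hrm⟩ => hrm ▸ hr, fun hm => ⟨⟨m, by omega⟩, hm, rfl⟩⟩
  calc _ = ∑ m ∈ (univ.filter fun r : Fin k => b ≤ r.1 ∧ r.1 < b + c).map Fin.valEmbedding, F m :=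
        (sum_map _ _ _).symm
    _ = _ := by rw [hval, sum_Ico_eq_sum_range, Nat.add_sub_cancel_left]

theorem one_sub_inv_mul_sum_cluster {K : Type*} [Field K] {q : K} (hq : q ≠ 0) {k b c : ℕ}
    (hbck : b + c ≤ k) {g : Fin k → K} {x : K}
    (hg : ∀ r : Fin k, b ≤ r.1 → r.1 < b + c → g r = q ^ ((r.1 : ℤ) + 1 - (b + c)) * x) :
    (1 - q⁻¹) * ∑ r ∈ univ.filter (fun r : Fin k => b ≤ r.1 ∧ r.1 < b + c), g r
      = (1 - q ^ (-(c : ℤ))) * x := by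
  rw [sum_congr rfl fun r hr => hg r (mem_filter.mp hr).2.1 (mem_filter.mp hr).2.2,
    Fin.sum_filter_le_lt_eq_sum_range hbck fun m : ℕ => q ^ ((m : ℤ) + 1 - (b + c)) * x,
    ← sum_mul, ← mul_assoc, ← one_sub_inv_mul_sum_range_zpow hq c]
  congr 3 with j
  push_cast
  ring_nf

theorem gradInv_eq_zpow_mul_of_cluster {k : ℕ} {a : ℕ → ℝ} {u : (Fin k → ℕ) → ℝ} {q : ℝ}
    (hq : q ≠ 0) {n : Fin k → ℕ}
    (hcc : ∀ i : Fin k, ∀ h : i.1 + 1 < k,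
      n i = n ⟨i.1 + 1, h⟩ → gradInv k a u i n - q⁻¹ * gradInv k a u ⟨i.1 + 1, h⟩ n = 0)
    {b c : ℕ} (hbck : b + c ≤ k) (hc : 1 ≤ c)
    (hcluster : ∀ r : Fin k, b ≤ r.1 → r.1 < b + c → n r = n ⟨b, by omega⟩)
    (r : Fin k) (hbr : b ≤ r.1) (hrc : r.1 < b + c) :
    gradInv k a u r n
      = q ^ ((r.1 : ℤ) + 1 - (b + c)) * gradInv k a u ⟨b + c - 1, by omega⟩ n := by
  let f : ℕ → ℝ := fun i => if h : i < k then gradInv k a u ⟨i, h⟩ n else 0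
  have hf (i : ℕ) (h : i < k) : f i = gradInv k a u ⟨i, h⟩ n := dif_pos h
  have hrec : ∀ i, r.1 ≤ i → i < b + c - 1 → f i = q⁻¹ * f (i + 1) := by
    intro i hri hic
    have hsucc : i + 1 < k := by omega
    rw [hf i (by omega), hf (i + 1) hsucc]
    refine sub_eq_zero.mp (hcc ⟨i, by omega⟩ hsucc ?_)
    rw [hcluster ⟨i, by omega⟩ (by simp only; omega) (by simp only; omega),
      hcluster ⟨i + 1, hsucc⟩ (by simp only; omega) (by simp only; omega)]
  have hpow := eq_zpow_sub_mul_of_eq_inv_mul_succ hq (by omega : r.1 ≤ b + c - 1) hrec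
  rw [hf r.1 r.2, hf (b + c - 1) (by omega)] at hpow
  rw [hpow]
  congr 2
  omega

theorem cumulative_conditions_cluster (k : ℕ)
    (q : ℝ) (hq0 : 0 < q)
    (a : ℕ → ℝ)
    (u : (Fin k → ℕ) → ℝ)
    (hcc : ∀ n : Fin k → ℕ, ∀ i : Fin k, ∀ h : i.1 + 1 < k,
      n i = n ⟨i.1 + 1, h⟩ →
      gradInv k a u i n - q⁻¹ * gradInv k a u ⟨i.1 + 1, h⟩ n = 0)
    (n : Fin k → ℕ) (b c : ℕ) (hc : 1 ≤ c) (hbck : b + c ≤ k)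
    (hcluster : ∀ r : Fin k, b ≤ r.1 → r.1 < b + c → n r = n ⟨b, by omega⟩) :
    (∀ r : Fin k, b ≤ r.1 → r.1 < b + c →
      gradInv k a u r n
        = q ^ (((r.1 : ℤ) + 1) - ((b : ℤ) + (c : ℤ))) * gradInv k a u ⟨b + c - 1, by omega⟩ n)
    ∧ (1 - q⁻¹) * (∑ r ∈ Finset.univ.filter (fun r : Fin k => b ≤ r.1 ∧ r.1 < b + c),
          gradInv k a u r n)
        = (1 - q ^ (-(c : ℤ))) * gradInv k a u ⟨b + c - 1, by omega⟩ n := by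
  have hpow := gradInv_eq_zpow_mul_of_cluster hq0.ne' (hcc n) hbck hc hcluster
  exact ⟨hpow, one_sub_inv_mul_sum_cluster hq0.ne' hbck hpow⟩
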